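/- arXiv:2105.11144 — 3 statements merged into one kernel-verified Lean document; each statement's English description precedes it below -/
import Mathlib

section
/- Let g : W → ℝ be a function satisfying the PL-inequality (1/2)‖∇g(w)‖² ≥ μ·(g(w) − g*) with g* = inf g, and suppose g is L-smooth (its gradient is L-Lipschitz). Consider gradient descent w_{t+1} = w_t − η_t ∇g(w_t) with step sizes η_t = 1/(μ t). Then g(w_{T+1}) − g* ≤ G²L/(T μ²), where G is an upper bound on ‖∇g(w_t)‖ along the trajectory. -/
/-!
A point where `g` is not differentiable has junk gradient `0`, so PL makes it a global minimiser,
and then the Lipschitz gradient bound gives `g y - g x ≤ L² ‖y - x‖² / (2μ)`: `g` is differentiable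
there after all. With differentiability everywhere, the descent lemma and PL turn one step of size
`1/(μ t)` into `e_{t+1} ≤ (1 - 2/t) e_t + G²L/(μ² t²)` for the gap `e_t = g(w_t) - g*`, and this
recurrence is solved by `e_{t+1} ≤ G²L/(μ² t)`.
-/

open Filter Asymptotics

lemma hasFDerivAt_zero_of_norm_sub_le_sq {E F : Type*} [NormedAddCommGroup E] [NormedSpace ℝ E]
    [NormedAddCommGroup F] [NormedSpace ℝ F] {f : E → F} {x : E} {C : ℝ}
    (hf : ∀ y, ‖f y - f x‖ ≤ C * ‖y - x‖ ^ 2) : HasFDerivAt f (0 : E →L[ℝ] F) x := by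
  rw [hasFDerivAt_iff_isLittleO_nhds_zero]
  simp only [zero_apply, sub_zero]
  refine IsBigO.trans_isLittleO ?_ (isLittleO_norm_pow_id one_lt_two)
  refine IsBigO.of_bound C (Eventually.of_forall fun v => ?_)
  simpa using hf (x + v)

section Gradient

variable {E : Type*} [NormedAddCommGroup E] [InnerProductSpace ℝ E] [CompleteSpace E]
  {g : E → ℝ} {μ L gstar : ℝ}

lemma differentiableAt_of_lipschitz_gradient_of_polyakLojasiewicz (hμ : 0 < μ)
    (hge : ∀ y, gstar ≤ g y)
    (hsmooth : ∀ w₁ w₂, ‖gradient g w₁ - gradient g w₂‖ ≤ L * ‖w₁ - w₂‖)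
    (hPL : ∀ w, μ * (g w - gstar) ≤ (1 / 2) * ‖gradient g w‖ ^ 2) (x : E) :
    DifferentiableAt ℝ g x := by
  by_contra h
  have hx₀ : gradient g x = 0 := gradient_eq_zero_of_not_differentiableAt h
  have hx_min : g x = gstar := by
    have := hPL x
    rw [hx₀, norm_zero] at this
    nlinarith [hge x]
  refine h (hasFDerivAt_zero_of_norm_sub_le_sq (C := L ^ 2 / (2 * μ)) fun y => ?_).differentiableAt
  have hy : ‖gradient g y‖ ≤ L * ‖y - x‖ := by simpa [hx₀] using hsmooth y x
  have hPLy := hPL y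
  rw [Real.norm_eq_abs, abs_of_nonneg (by linarith [hge y]), hx_min, div_mul_eq_mul_div,
    le_div_iff₀ (by positivity)]
  nlinarith [pow_le_pow_left₀ (norm_nonneg _) hy 2]

theorem le_add_inner_gradient_add_of_lipschitz_gradient (hdiff : Differentiable ℝ g)
    (hsmooth : ∀ w₁ w₂, ‖gradient g w₁ - gradient g w₂‖ ≤ L * ‖w₁ - w₂‖) (x v : E) :
    g (x + v) ≤ g x + inner ℝ (gradient g x) v + L / 2 * ‖v‖ ^ 2 := by
  set ψ : ℝ → ℝ := fun s => L / 2 * s ^ 2 * ‖v‖ ^ 2 - g (x + s • v) + s * inner ℝ (gradient g x) v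
  have hψ' : ∀ s : ℝ, HasDerivAt ψ
      (L * s * ‖v‖ ^ 2 - inner ℝ (gradient g (x + s • v)) v + inner ℝ (gradient g x) v) s := by
    intro s
    have hline : HasDerivAt (fun s : ℝ => x + s • v) v s := by
      simpa using ((hasDerivAt_id s).smul_const v).const_add x
    have hg := (hdiff (x + s • v)).hasFDerivAt.comp_hasDerivAt s hline
    rw [← inner_gradient_left] at hg
    exact ((((hasDerivAt_pow 2 s).const_mul (L / 2)).mul_const (‖v‖ ^ 2)).sub hg
      |>.add (hasDerivAt_mul_const (inner ℝ (gradient g x) v))).congr_deriv (by push_cast; ring)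
  have hψ'_nonneg : ∀ s ∈ interior (Set.Ici (0 : ℝ)),
      0 ≤ L * s * ‖v‖ ^ 2 - inner ℝ (gradient g (x + s • v)) v + inner ℝ (gradient g x) v := by
    intro s hs
    rw [interior_Ici, Set.mem_Ioi] at hs
    have hinner := real_inner_le_norm (gradient g (x + s • v) - gradient g x) v
    have hlip := hsmooth (x + s • v) x
    rw [add_sub_cancel_left, norm_smul, Real.norm_eq_abs, abs_of_pos hs] at hlip
    rw [inner_sub_left] at hinner
    nlinarith [mul_le_mul_of_nonneg_right hlip (norm_nonneg v)]
  have hmono : MonotoneOn ψ (Set.Ici 0) :=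
    monotoneOn_of_hasDerivWithinAt_nonneg (convex_Ici 0)
      (fun s _ => (hψ' s).continuousAt.continuousWithinAt)
      (fun s _ => (hψ' s).hasDerivWithinAt) hψ'_nonneg
  have := hmono Set.self_mem_Ici (show (0 : ℝ) ≤ 1 from zero_le_one) zero_le_one
  simp only [ψ, zero_smul, add_zero, one_smul, zero_mul, one_mul, ne_eq, OfNat.ofNat_ne_zero,
    not_false_eq_true, zero_pow, one_pow, mul_one] at this
  linarith

theorem gradient_step_sub_le (hdiff : Differentiable ℝ g)
    (hsmooth : ∀ w₁ w₂, ‖gradient g w₁ - gradient g w₂‖ ≤ L * ‖w₁ - w₂‖)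
    (hPL : ∀ w, μ * (g w - gstar) ≤ (1 / 2) * ‖gradient g w‖ ^ 2) {η : ℝ} (hη : 0 ≤ η) (w : E) :
    g (w - η • gradient g w) - gstar
      ≤ (1 - 2 * μ * η) * (g w - gstar) + L / 2 * η ^ 2 * ‖gradient g w‖ ^ 2 := by
  have hdesc := le_add_inner_gradient_add_of_lipschitz_gradient hdiff hsmooth w
    (-(η • gradient g w))
  rw [← sub_eq_add_neg, inner_neg_right, real_inner_smul_right, real_inner_self_eq_norm_sq,
    norm_neg, norm_smul, Real.norm_eq_abs, abs_of_nonneg hη] at hdesc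
  nlinarith [mul_le_mul_of_nonneg_left (hPL w) hη]

end Gradient

theorem le_div_of_le_one_sub_two_div_mul_add_div_sq {e : ℕ → ℝ} {C : ℝ} (hC : 0 ≤ C)
    (he : ∀ t, 0 ≤ e t) (hrec : ∀ t : ℕ, 1 ≤ t → e (t + 1) ≤ (1 - 2 / t) * e t + C / t ^ 2)
    {T : ℕ} (hT : 1 ≤ T) : e (T + 1) ≤ C / T := by
  induction T, hT using Nat.le_induction with
  | base => simpa using (hrec 1 le_rfl).trans (by norm_num; linarith [he 1])
  | succ n hn ih =>
    have hn' : (1 : ℝ) ≤ n := by exact_mod_cast hn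
    have hrec' := hrec (n + 1) (by omega)
    push_cast at hrec' ⊢
    have hcoef : 0 ≤ 1 - 2 / ((n : ℝ) + 1) := by
      rw [sub_nonneg, div_le_one (by linarith)]; linarith
    calc e (n + 1 + 1) ≤ (1 - 2 / ((n : ℝ) + 1)) * e (n + 1) + C / ((n : ℝ) + 1) ^ 2 := hrec'
      _ ≤ (1 - 2 / ((n : ℝ) + 1)) * (C / n) + C / ((n : ℝ) + 1) ^ 2 := by gcongr
      _ = C / ((n : ℝ) + 1) - C / (n * ((n : ℝ) + 1) ^ 2) := by field_simp; ring
      _ ≤ C / ((n : ℝ) + 1) := sub_le_self _ (by positivity)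

theorem stmt5_general {p : ℕ} (g : EuclideanSpace ℝ (Fin p) → ℝ) (μ L G gstar : ℝ)
    (hμ : 0 < μ) (hL : 0 < L)
    (hglb : IsGLB (Set.range g) gstar)
    (hsmooth : ∀ w₁ w₂, ‖gradient g w₁ - gradient g w₂‖ ≤ L * ‖w₁ - w₂‖)
    (hPL : ∀ w, μ * (g w - gstar) ≤ (1 / 2) * ‖gradient g w‖ ^ 2)
    (w : ℕ → EuclideanSpace ℝ (Fin p))
    (hupd : ∀ t : ℕ, 1 ≤ t → w (t + 1) = w t - (1 / (μ * t)) • gradient g (w t))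
    (hGbd : ∀ t, ‖gradient g (w t)‖ ≤ G)
    (T : ℕ) (hT : 1 ≤ T) :
    g (w (T + 1)) - gstar ≤ G ^ 2 * L / (T * μ ^ 2) := by
  have hge : ∀ y, gstar ≤ g y := fun y => hglb.1 (Set.mem_range_self y)
  have hdiff : Differentiable ℝ g :=
    differentiableAt_of_lipschitz_gradient_of_polyakLojasiewicz hμ hge hsmooth hPL
  have hrate := le_div_of_le_one_sub_two_div_mul_add_div_sq (e := fun t => g (w t) - gstar)
    (C := G ^ 2 * L / μ ^ 2) (by positivity) (fun t => sub_nonneg.2 (hge _)) ?_ hT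
  · simpa only [div_div, mul_comm (μ ^ 2)] using hrate
  intro t ht
  have ht' : (0 : ℝ) < t := by exact_mod_cast ht
  have hstep := gradient_step_sub_le hdiff hsmooth hPL (by positivity : 0 ≤ 1 / (μ * t)) (w t)
  rw [← hupd t ht] at hstep
  have hG2 : ‖gradient g (w t)‖ ^ 2 ≤ G ^ 2 := pow_le_pow_left₀ (norm_nonneg _) (hGbd t) 2
  calc g (w (t + 1)) - gstar
      ≤ (1 - 2 * μ * (1 / (μ * t))) * (g (w t) - gstar)
        + L / 2 * (1 / (μ * t)) ^ 2 * ‖gradient g (w t)‖ ^ 2 := hstep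
    _ ≤ (1 - 2 * μ * (1 / (μ * t))) * (g (w t) - gstar) + L * (1 / (μ * t)) ^ 2 * G ^ 2 := by
        gcongr
        nlinarith [norm_nonneg (gradient g (w t))]
    _ = (1 - 2 / t) * (g (w t) - gstar) + G ^ 2 * L / μ ^ 2 / t ^ 2 := by
        field_simp

/-- Gradient descent with step sizes `η_t = 1/(μ t)` on an `L`-smooth function
satisfying the PL inequality converges at rate `G²L/(T μ²)`. -/
theorem stmt5 {p : ℕ} (g : EuclideanSpace ℝ (Fin p) → ℝ) (μ L G gstar : ℝ)
    (hμ : 0 < μ) (hL : 0 < L) (hG : 0 ≤ G)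
    (hglb : IsGLB (Set.range g) gstar)
    (hsmooth : ∀ w₁ w₂, ‖gradient g w₁ - gradient g w₂‖ ≤ L * ‖w₁ - w₂‖)
    (hPL : ∀ w, μ * (g w - gstar) ≤ (1 / 2) * ‖gradient g w‖ ^ 2)
    (w : ℕ → EuclideanSpace ℝ (Fin p))
    (hupd : ∀ t : ℕ, 1 ≤ t → w (t + 1) = w t - (1 / (μ * t)) • gradient g (w t))
    (hGbd : ∀ t, ‖gradient g (w t)‖ ≤ G)
    (T : ℕ) (hT : 1 ≤ T) :
    g (w (T + 1)) - gstar ≤ G ^ 2 * L / (T * μ ^ 2) :=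
  stmt5_general g μ L G gstar hμ hL hglb hsmooth hPL w hupd hGbd T hT
end

section
/- Suppose sup over all distributions Q with W_∞(Q_0, Q) ≤ r of E_Q[f(w,·)] ≤ ε_pre, and 0 ≤ f(w,·) ≤ M. Then for any distribution P_0, sup over all P with W_∞(P_0, P) ≤ r of E_P[f(w,·)] ≤ ε_pre + 2·M·TV(P_0, Q_0). -/
/-!
Let `π` be a coupling of `P₀` and `P` moving no mass farther than `r`; it exists by compactness
of the space of probability measures on `X × X`. Write `P₀ = γ + (P₀ - Q₀)` and
`Q₀ = γ + (Q₀ - P₀)` with a common part `γ` (Hahn decomposition). Disintegrating `π` along its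
first marginal splits `P` as `T + A`, where `T` is the image of `γ` under the transport and
`A` has the mass of `P₀ - Q₀`, at most `2 TV(P₀, Q₀)`. Then `Q := T + (Q₀ - P₀)` is within
`W∞`-distance `r` of `Q₀` (move `γ` as `π` does, keep `Q₀ - P₀` in place), and
`E_P f = E_T f + E_A f ≤ E_Q f + M · A(X)`.
-/

open MeasureTheory ENNReal

def IsCoupling {α : Type*} [MeasurableSpace α] (π : Measure (α × α)) (P Q : Measure α) : Prop :=
  π.map Prod.fst = P ∧ π.map Prod.snd = Q

noncomputable def Winf {α : Type*} [MeasurableSpace α] [PseudoEMetricSpace α]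
    (P Q : Measure α) : ℝ≥0∞ :=
  ⨅ π ∈ {π : Measure (α × α) | IsProbabilityMeasure π ∧ IsCoupling π P Q},
    essSup (fun p => edist p.1 p.2) π

noncomputable def tvDist {α : Type*} [MeasurableSpace α] (P Q : Measure α)
    [IsFiniteMeasure P] [IsFiniteMeasure Q] : ℝ :=
  ((P.toSignedMeasure - Q.toSignedMeasure).totalVariation Set.univ).toReal / 2

open Filter Set Topology
open scoped ProbabilityTheory

namespace IsCoupling

variable {α : Type*} [MeasurableSpace α] {π π' : Measure (α × α)} {P Q P' Q' : Measure α}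

lemma isFiniteMeasure (h : IsCoupling π P Q) [IsFiniteMeasure P] : IsFiniteMeasure π := by
  constructor
  rw [← preimage_univ (f := Prod.fst), ← Measure.map_apply measurable_fst .univ, h.1]
  exact measure_lt_top P univ

lemma isProbabilityMeasure (h : IsCoupling π P Q) [IsProbabilityMeasure P] :
    IsProbabilityMeasure π := by
  constructor
  rw [← preimage_univ (f := Prod.fst), ← Measure.map_apply measurable_fst .univ, h.1,
    measure_univ]

lemma isProbabilityMeasure_right (h : IsCoupling π P Q) [IsProbabilityMeasure P] :
    IsProbabilityMeasure Q := by
  have := h.isProbabilityMeasure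
  exact h.2 ▸ Measure.isProbabilityMeasure_map measurable_snd.aemeasurable

lemma add (h : IsCoupling π P Q) (h' : IsCoupling π' P' Q') :
    IsCoupling (π + π') (P + P') (Q + Q') :=
  ⟨by rw [Measure.map_add _ _ measurable_fst, h.1, h'.1],
    by rw [Measure.map_add _ _ measurable_snd, h.2, h'.2]⟩

lemma map_diag (P : Measure α) : IsCoupling (P.map fun x => (x, x)) P P := by
  have hdiag : Measurable fun x : α => (x, x) := measurable_id.prodMk measurable_id
  exact ⟨by rw [Measure.map_map measurable_fst hdiag]; exact Measure.map_id,
    by rw [Measure.map_map measurable_snd hdiag]; exact Measure.map_id⟩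

variable [PseudoEMetricSpace α]

/-- `T` and `A` are the parts of `P` that `π` transports from `γ` and from `δ`. -/
lemma exists_split_add [StandardBorelSpace α] [Nonempty α] {γ δ : Measure α}
    [IsFiniteMeasure γ] [IsFiniteMeasure δ] (h : IsCoupling π (γ + δ) P) {r : ℝ≥0∞}
    (hr : ∀ᵐ p ∂π, edist p.1 p.2 ≤ r) :
    ∃ T A : Measure α, IsFiniteMeasure T ∧ IsFiniteMeasure A ∧ T + A = P ∧ A univ = δ univ ∧
      ∃ π₁ : Measure (α × α), IsCoupling π₁ γ T ∧ ∀ᵐ p ∂π₁, edist p.1 p.2 ≤ r := by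
  have := h.isFiniteMeasure
  have hπ : π = γ ⊗ₘ π.condKernel + δ ⊗ₘ π.condKernel := by
    rw [← Measure.compProd_add_left, ← h.1]
    exact (Measure.disintegrate π π.condKernel).symm
  rw [hπ, ae_add_measure_iff] at hr
  refine ⟨(γ ⊗ₘ π.condKernel).snd, (δ ⊗ₘ π.condKernel).snd, inferInstance, inferInstance,
    by rw [← Measure.snd_add, ← hπ]; exact h.2,
    by rw [Measure.snd_univ, Measure.compProd_apply_univ],
    γ ⊗ₘ π.condKernel, ⟨Measure.fst_compProd _ _, rfl⟩, hr.1⟩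

end IsCoupling

lemma ae_edist_map_diag_le {α : Type*} [PseudoEMetricSpace α] [MeasurableSpace α]
    [OpensMeasurableSpace α] [SecondCountableTopology α] (P : Measure α) (r : ℝ≥0∞) :
    ∀ᵐ p ∂(P.map fun x => (x, x)), edist p.1 p.2 ≤ r := by
  have hdiag : Measurable fun x : α => (x, x) := measurable_id.prodMk measurable_id
  rw [ae_map_iff hdiag.aemeasurable (measurableSet_le measurable_edist measurable_const)]
  exact ae_of_all _ fun x => by simp

section Winf

variable {α : Type*} [MeasurableSpace α] [PseudoEMetricSpace α]

lemma Winf_le_of_isCoupling {π : Measure (α × α)} {P Q : Measure α} [IsProbabilityMeasure P]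
    (hπ : IsCoupling π P Q) {r : ℝ≥0∞} (hr : ∀ᵐ p ∂π, edist p.1 p.2 ≤ r) : Winf P Q ≤ r :=
  (iInf₂_le π ⟨hπ.isProbabilityMeasure, hπ⟩).trans (essSup_le_of_ae_le r hr)

lemma exists_isCoupling_of_Winf_lt {P Q : Measure α} {t : ℝ≥0∞} (h : Winf P Q < t) :
    ∃ π : Measure (α × α), IsProbabilityMeasure π ∧ IsCoupling π P Q ∧
      ∀ᵐ p ∂π, edist p.1 p.2 ≤ t := by
  obtain ⟨π, hπ, hlt⟩ := by simpa only [Winf, iInf_lt_iff] using h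
  exact ⟨π, hπ.1, hπ.2, (_root_.ae_le_essSup).mono fun p hp => hp.trans hlt.le⟩

end Winf

namespace MeasureTheory.ProbabilityMeasure

variable {Ω Ω' ι : Type*} [MeasurableSpace Ω] [TopologicalSpace Ω] [OpensMeasurableSpace Ω]
  {L : Filter ι} {μ : ProbabilityMeasure Ω} {μs : ι → ProbabilityMeasure Ω}

lemma ae_mem_of_tendsto [HasOuterApproxClosed Ω] [L.NeBot] (hμ : Tendsto μs L (𝓝 μ))
    {F : Set Ω} (hF : IsClosed F) (h : ∀ᶠ i in L, ∀ᵐ x ∂(μs i : Measure Ω), x ∈ F) :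
    ∀ᵐ x ∂(μ : Measure Ω), x ∈ F := by
  have hnull : (fun i => (μs i : Measure Ω) Fᶜ) =ᶠ[L] 0 := h.mono fun i hi => hi
  refine le_antisymm ?_ bot_le
  calc (μ : Measure Ω) Fᶜ ≤ L.liminf fun i => (μs i : Measure Ω) Fᶜ :=
        le_liminf_measure_open_of_tendsto hμ hF.isOpen_compl
    _ = 0 := by rw [liminf_congr hnull, Pi.zero_def, liminf_const]

lemma map_eq_of_tendsto [MeasurableSpace Ω'] [TopologicalSpace Ω'] [BorelSpace Ω']
    [T2Space (ProbabilityMeasure Ω')] [L.NeBot] (hμ : Tendsto μs L (𝓝 μ)) {g : Ω → Ω'}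
    (hg : Continuous g) {P : ProbabilityMeasure Ω'}
    (hP : ∀ i, (μs i).map hg.measurable.aemeasurable = P) :
    μ.map hg.measurable.aemeasurable = P :=
  tendsto_nhds_unique (((continuous_map hg).tendsto μ).comp hμ)
    (by simp only [Function.comp_def, hP]; exact tendsto_const_nhds)

end MeasureTheory.ProbabilityMeasure

/-- The infimum is attained at a weak limit point of near-optimal couplings: full measure of
the closed sets `{edist ≤ r + 1/(k+1)}` passes to the limit. -/
lemma exists_isCoupling_of_Winf_le {X : Type*} [EMetricSpace X] [CompactSpace X]
    [MeasurableSpace X] [BorelSpace X] {P Q : Measure X} [IsProbabilityMeasure P]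
    [IsProbabilityMeasure Q] {r : ℝ≥0∞} (hr : r ≠ ∞) (h : Winf P Q ≤ r) :
    ∃ π : Measure (X × X), IsCoupling π P Q ∧ ∀ᵐ p ∂π, edist p.1 p.2 ≤ r := by
  have hcoupling (n : ℕ) := exists_isCoupling_of_Winf_lt
    (h.trans_lt (lt_add_right hr (ENNReal.inv_ne_zero.2 (natCast_ne_top (n + 1)))))
  choose π hπ hπc hπr using hcoupling
  let πs (n : ℕ) : ProbabilityMeasure (X × X) := ⟨π n, hπ n⟩
  let U := Ultrafilter.of (atTop : Filter ℕ)
  obtain ⟨μ, -, hμ⟩ := isCompact_univ.ultrafilter_le_nhds (U.map πs) (le_principal_iff.2 univ_mem)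
  have hlim : Tendsto πs U (𝓝 μ) := by rwa [Ultrafilter.coe_map] at hμ
  have hfst := ProbabilityMeasure.map_eq_of_tendsto hlim continuous_fst (P := ⟨P, inferInstance⟩)
    fun n => ProbabilityMeasure.toMeasure_injective
      ((ProbabilityMeasure.toMeasure_map _ _).trans (hπc n).1)
  have hsnd := ProbabilityMeasure.map_eq_of_tendsto hlim continuous_snd (P := ⟨Q, inferInstance⟩)
    fun n => ProbabilityMeasure.toMeasure_injective
      ((ProbabilityMeasure.toMeasure_map _ _).trans (hπc n).2)
  refine ⟨μ, ⟨(ProbabilityMeasure.toMeasure_map _ _).symm.trans (congrArg _ hfst),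
    (ProbabilityMeasure.toMeasure_map _ _).symm.trans (congrArg _ hsnd)⟩, ?_⟩
  have happrox (k : ℕ) :
      ∀ᵐ p ∂(μ : Measure (X × X)), edist p.1 p.2 ≤ r + ((k + 1 : ℕ) : ℝ≥0∞)⁻¹ := by
    refine ProbabilityMeasure.ae_mem_of_tendsto hlim
      (isClosed_le continuous_edist continuous_const) ?_
    filter_upwards [Ultrafilter.of_le (atTop : Filter ℕ) (eventually_ge_atTop k)] with n hn
    exact (hπr n).mono fun p hp => hp.trans (by gcongr)
  filter_upwards [ae_all_iff.2 happrox] with p hp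
  refine ENNReal.le_of_forall_pos_le_add fun ε hε _ => ?_
  obtain ⟨k, hk⟩ := ENNReal.exists_inv_nat_lt (a := ε) (by simpa using hε.ne')
  exact (hp k).trans (by gcongr; exact le_trans (by gcongr; simp) hk.le)

namespace MeasureTheory

variable {α : Type*} [MeasurableSpace α] {μ ν : Measure α}

lemma IsHahnDecomposition.restrict_add_restrict_compl_add_sub {s : Set α} [IsFiniteMeasure ν]
    (hs : IsHahnDecomposition μ ν s) : μ.restrict s + ν.restrict sᶜ + (μ - ν) = μ := by
  have hsub : μ - ν = μ.restrict sᶜ - ν.restrict sᶜ := by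
    rw [← Measure.restrict_add_restrict_compl (μ := μ - ν) hs.measurableSet,
      Measure.restrict_sub_eq_restrict_sub_restrict hs.measurableSet,
      Measure.restrict_sub_eq_restrict_sub_restrict hs.measurableSet.compl,
      Measure.sub_eq_zero_of_le hs.le_on, zero_add]
  rw [hsub, add_assoc, add_comm (ν.restrict sᶜ), Measure.sub_add_cancel_of_le hs.ge_on_compl,
    Measure.restrict_add_restrict_compl hs.measurableSet]

namespace Measure

lemma exists_add_sub_eq_and_add_sub_eq (μ ν : Measure α) [IsFiniteMeasure μ]
    [IsFiniteMeasure ν] :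
    ∃ γ : Measure α, IsFiniteMeasure γ ∧ γ + (μ - ν) = μ ∧ γ + (ν - μ) = ν := by
  obtain ⟨s, hs⟩ := exists_isHahnDecomposition μ ν
  refine ⟨μ.restrict s + ν.restrict sᶜ, inferInstance,
    hs.restrict_add_restrict_compl_add_sub, ?_⟩
  simpa only [compl_compl, add_comm (ν.restrict sᶜ)] using
    hs.compl.restrict_add_restrict_compl_add_sub

lemma sub_apply_univ_le_two_mul_tvDist (μ ν : Measure α) [IsFiniteMeasure μ]
    [IsFiniteMeasure ν] : ((μ - ν) univ).toReal ≤ 2 * tvDist μ ν := by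
  have htv : (μ.toSignedMeasure - ν.toSignedMeasure).totalVariation univ =
      (μ - ν) univ + (ν - μ) univ := by
    rw [SignedMeasure.totalVariation, toJordanDecomposition_toSignedMeasure_sub]
    rfl
  rw [tvDist, htv, ENNReal.toReal_add (measure_ne_top _ _) (measure_ne_top _ _)]
  linarith [ENNReal.toReal_nonneg (a := (ν - μ) univ)]

end Measure

end MeasureTheory

lemma integral_add_measure_le_integral_add_measure {α : Type*} [MeasurableSpace α]
    {f : α → ℝ} (hf : Measurable f) {M : ℝ} (hf0 : ∀ x, 0 ≤ f x) (hfM : ∀ x, f x ≤ M)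
    (μ ν ρ : Measure α) [IsFiniteMeasure μ] [IsFiniteMeasure ν] [IsFiniteMeasure ρ] :
    ∫ x, f x ∂(μ + ν) ≤ ∫ x, f x ∂(μ + ρ) + M * (ν univ).toReal := by
  have hint (κ : Measure α) [IsFiniteMeasure κ] : Integrable f κ :=
    .of_bound hf.aestronglyMeasurable M (ae_of_all _ fun x => by
      rw [Real.norm_of_nonneg (hf0 x)]; exact hfM x)
  have hν : ∫ x, f x ∂ν ≤ M * (ν univ).toReal := by
    simpa [measureReal_def, mul_comm] using integral_mono (hint ν) (integrable_const M) hfM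
  rw [integral_add_measure (hint μ) (hint ν), integral_add_measure (hint μ) (hint ρ)]
  linarith [(integral_nonneg fun x => hf0 x : 0 ≤ ∫ x, f x ∂ρ)]

theorem stmt10_general {X : Type*} [MetricSpace X] [CompactSpace X] [MeasurableSpace X] [BorelSpace X]
    (P₀ Q₀ : Measure X) [IsProbabilityMeasure P₀] [IsProbabilityMeasure Q₀]
    (f : X → ℝ) (hf : Measurable f) (M r εpre : ℝ) (hM : 0 ≤ M)
    (hbd : ∀ x, 0 ≤ f x ∧ f x ≤ M)
    (hQ : ∀ Q : Measure X, IsProbabilityMeasure Q → Winf Q₀ Q ≤ ENNReal.ofReal r →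
      ∫ x, f x ∂Q ≤ εpre) :
    ∀ P : Measure X, IsProbabilityMeasure P → Winf P₀ P ≤ ENNReal.ofReal r →
      ∫ x, f x ∂P ≤ εpre + 2 * M * tvDist P₀ Q₀ := by
  intro P _ hWP
  have := nonempty_of_isProbabilityMeasure P₀
  obtain ⟨π, hπ, hπr⟩ := exists_isCoupling_of_Winf_le ofReal_ne_top hWP
  obtain ⟨γ, _, hγP₀, hγQ₀⟩ := Measure.exists_add_sub_eq_and_add_sub_eq P₀ Q₀
  rw [← hγP₀] at hπ
  obtain ⟨T, A, _, _, rfl, hA, π₁, hπ₁, hπ₁r⟩ := hπ.exists_split_add hπr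
  have hQc : IsCoupling (π₁ + (Q₀ - P₀).map fun x => (x, x)) Q₀ (T + (Q₀ - P₀)) := by
    simpa only [hγQ₀] using hπ₁.add (.map_diag (Q₀ - P₀))
  have hQprob := hQc.isProbabilityMeasure_right
  have hWQ := Winf_le_of_isCoupling hQc
    (ae_add_measure_iff.2 ⟨hπ₁r, ae_edist_map_diag_le _ _⟩)
  calc ∫ x, f x ∂(T + A)
      ≤ ∫ x, f x ∂(T + (Q₀ - P₀)) + M * (A univ).toReal :=
        integral_add_measure_le_integral_add_measure hf (fun x => (hbd x).1)
          (fun x => (hbd x).2) _ _ _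
    _ ≤ εpre + M * (2 * tvDist P₀ Q₀) := by
        rw [hA]
        gcongr
        · exact hQ _ hQprob hWQ
        · exact Measure.sub_apply_univ_le_two_mul_tvDist P₀ Q₀
    _ = εpre + 2 * M * tvDist P₀ Q₀ := by ring

/-- If `sup_{Q : W∞(Q₀,Q) ≤ r} E_Q f ≤ ε_pre` and `0 ≤ f ≤ M`, then
`sup_{P : W∞(P₀,P) ≤ r} E_P f ≤ ε_pre + 2 M · TV(P₀, Q₀)`. -/
theorem stmt10 {X : Type*} [MetricSpace X] [CompactSpace X] [MeasurableSpace X] [BorelSpace X]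
    (P₀ Q₀ : Measure X) [IsProbabilityMeasure P₀] [IsProbabilityMeasure Q₀]
    (f : X → ℝ) (hf : Measurable f) (M r εpre : ℝ) (hM : 0 ≤ M) (hr : 0 ≤ r)
    (hbd : ∀ x, 0 ≤ f x ∧ f x ≤ M)
    (hQ : ∀ Q : Measure X, IsProbabilityMeasure Q → Winf Q₀ Q ≤ ENNReal.ofReal r →
      ∫ x, f x ∂Q ≤ εpre) :
    ∀ P : Measure X, IsProbabilityMeasure P → Winf P₀ P ≤ ENNReal.ofReal r →
      ∫ x, f x ∂P ≤ εpre + 2 * M * tvDist P₀ Q₀ :=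
  stmt10_general P₀ Q₀ f hf M r εpre hM hbd hQ
end

section
/- Let P_0 and Q_0 be probability measures on a set X of ℓ_2-diameter at most D. Then for any r ≥ 0 and any P with W_2(P_0, P) ≤ r, there exists Q with W_2(Q_0, Q) ≤ √(2D²·TV(P_0, Q_0) + r²) such that E_P[f] ≤ E_Q[f] + 2M·TV(P_0, Q_0) for every measurable f with 0 ≤ f ≤ M. Consequently, if sup_{Q : W_2(Q_0,Q) ≤ √(2D²·TV(P_0,Q_0) + r²)} E_Q[f] ≤ ε, then sup_{P : W_2(P_0,P) ≤ r} E_P[f] ≤ ε + 2M·TV(P_0, Q_0). -/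
open MeasureTheory ENNReal

/-- Squared 2-Wasserstein distance: `W₂(P,Q)² = inf_π E_π[dist(u,v)²]`. -/
noncomputable def W2sq {α : Type*} [MeasurableSpace α] [PseudoEMetricSpace α]
    (P Q : Measure α) : ℝ≥0∞ :=
  ⨅ π ∈ {π : Measure (α × α) | IsProbabilityMeasure π ∧ IsCoupling π P Q},
    ∫⁻ p, (edist p.1 p.2) ^ 2 ∂π

/-!
Let `ν` be the common part of `P₀` and `Q₀`, read off a Hahn decomposition; its mass is
`1 - TV(P₀, Q₀)`. Given a coupling `π` of `P₀` and `P`, thin `π` so that its first marginal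
becomes `ν`, and couple the leftover `Q₀ - ν` with itself along the diagonal. This couples `Q₀`
with a probability measure `Q` at no greater cost than `π`, and `P` and `Q` both dominate the
second marginal of the thinned coupling, which has mass `1 - TV`; hence
`E_P f ≤ E_Q f + M · TV(P₀, Q₀)`. Since the infimum defining `W₂` need not be attained, the
positive term `2D² · TV` is the slack that lets us pick `π`; it vanishes only when `P₀ = Q₀`,
where `Q = P` works.
-/

section TotalVariation

variable {X : Type*} [MeasurableSpace X]

lemma tvDist_eq_measureReal_sub (P Q : Measure X) [IsFiniteMeasure P] [IsFiniteMeasure Q] :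
    tvDist P Q = ((P - Q).real Set.univ + (Q - P).real Set.univ) / 2 := by
  rw [tvDist, SignedMeasure.totalVariation, Measure.toJordanDecomposition_toSignedMeasure_sub,
    Measure.jordanDecompositionOfToSignedMeasureSub_posPart,
    Measure.jordanDecompositionOfToSignedMeasureSub_negPart, Measure.add_apply,
    ENNReal.toReal_add (measure_ne_top _ _) (measure_ne_top _ _)]
  rfl

lemma tvDist_nonneg (P Q : Measure X) [IsFiniteMeasure P] [IsFiniteMeasure Q] :
    0 ≤ tvDist P Q := by
  rw [tvDist_eq_measureReal_sub]; positivity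

lemma MeasureTheory.IsHahnDecomposition.measureReal_sub_univ {μ ν : Measure X}
    [IsFiniteMeasure μ] [IsFiniteMeasure ν] {s : Set X} (h : IsHahnDecomposition μ ν s) :
    (ν - μ).real Set.univ = ν.real s - μ.real s := by
  have hs := h.measurableSet
  have hsc : (ν - μ).real sᶜ = 0 := by
    simp [measureReal_def, Measure.sub_apply_eq_zero_of_isHahnDecomposition h.compl]
  have hμν : μ s ≤ ν s := by simpa using h.le_on Set.univ
  have hsub : (ν - μ) s = ν s - μ s := by
    rw [← Measure.restrict_apply_univ, Measure.restrict_sub_eq_restrict_sub_restrict hs,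
      Measure.sub_apply .univ h.le_on, Measure.restrict_apply_univ, Measure.restrict_apply_univ]
  rw [← measureReal_add_measureReal_compl hs, hsc, add_zero, measureReal_def, hsub,
    ENNReal.toReal_sub_of_le hμν (measure_ne_top _ _)]
  rfl

lemma tvDist_eq_of_isHahnDecomposition {P Q : Measure X} [IsProbabilityMeasure P]
    [IsProbabilityMeasure Q] {s : Set X} (h : IsHahnDecomposition Q P s) :
    tvDist P Q = P.real s - Q.real s := by
  rw [tvDist_eq_measureReal_sub, h.measureReal_sub_univ, h.compl.measureReal_sub_univ,
    probReal_compl_eq_one_sub h.measurableSet, probReal_compl_eq_one_sub h.measurableSet]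
  ring

lemma exists_le_le_measureReal_univ_eq_one_sub_tvDist (P Q : Measure X) [IsProbabilityMeasure P]
    [IsProbabilityMeasure Q] : ∃ ν ≤ P, ν ≤ Q ∧ ν.real Set.univ = 1 - tvDist P Q := by
  obtain ⟨s, hs⟩ := exists_isHahnDecomposition Q P
  refine ⟨Q.restrict s + P.restrict sᶜ, ?_, ?_, ?_⟩
  · calc _ ≤ P.restrict s + P.restrict sᶜ := add_le_add hs.le_on le_rfl
      _ = P := Measure.restrict_add_restrict_compl hs.measurableSet
  · calc _ ≤ Q.restrict s + Q.restrict sᶜ := add_le_add le_rfl hs.ge_on_compl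
      _ = Q := Measure.restrict_add_restrict_compl hs.measurableSet
  · rw [tvDist_eq_of_isHahnDecomposition hs, measureReal_add_apply,
      measureReal_restrict_apply_univ, measureReal_restrict_apply_univ,
      probReal_compl_eq_one_sub hs.measurableSet]
    ring

lemma eq_of_tvDist_eq_zero {P Q : Measure X} [IsProbabilityMeasure P] [IsProbabilityMeasure Q]
    (h : tvDist P Q = 0) : P = Q := by
  obtain ⟨ν, hνP, hνQ, hν⟩ := exists_le_le_measureReal_univ_eq_one_sub_tvDist P Q
  have : IsFiniteMeasure ν := isFiniteMeasure_of_le P hνP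
  have hν1 : ν Set.univ = 1 := by
    rw [h, sub_zero, measureReal_def, ENNReal.toReal_eq_one_iff] at hν; exact hν
  rw [← Measure.eq_of_le_of_measure_univ_eq hνP (by simp [hν1]),
    Measure.eq_of_le_of_measure_univ_eq hνQ (by simp [hν1])]

end TotalVariation

section Coupling

variable {X Y : Type*} [MeasurableSpace X] [MeasurableSpace Y]

lemma IsCoupling.add_s11 {π₁ π₂ : Measure (X × X)} {P₁ Q₁ P₂ Q₂ : Measure X}
    (h₁ : IsCoupling π₁ P₁ Q₁) (h₂ : IsCoupling π₂ P₂ Q₂) :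
    IsCoupling (π₁ + π₂) (P₁ + P₂) (Q₁ + Q₂) :=
  ⟨by rw [Measure.map_add _ _ measurable_fst, h₁.1, h₂.1],
    by rw [Measure.map_add _ _ measurable_snd, h₁.2, h₂.2]⟩

lemma isCoupling_map_diag (ρ : Measure X) : IsCoupling (ρ.map fun x ↦ (x, x)) ρ ρ := by
  have hdiag : Measurable fun x : X ↦ (x, x) := measurable_id.prodMk measurable_id
  exact ⟨by rw [Measure.map_map measurable_fst hdiag]; exact Measure.map_id,
    by rw [Measure.map_map measurable_snd hdiag]; exact Measure.map_id⟩

lemma lintegral_map_diag_eq_zero (ρ : Measure X) {c : X × X → ℝ≥0∞} (hc : ∀ x, c (x, x) = 0) :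
    ∫⁻ p, c p ∂(ρ.map fun x ↦ (x, x)) = 0 :=
  le_antisymm ((lintegral_map_le _ _).trans (by simp [hc])) zero_le

lemma IsCoupling.isProbabilityMeasure_s11 {π : Measure (X × X)} {P Q : Measure X}
    (h : IsCoupling π P Q) [IsProbabilityMeasure P] : IsProbabilityMeasure π := by
  constructor
  rw [← Set.preimage_univ (f := Prod.fst), ← Measure.map_apply measurable_fst .univ, h.1,
    measure_univ]

lemma W2sq_le_lintegral [PseudoEMetricSpace X] {π : Measure (X × X)} {P Q : Measure X}
    [IsProbabilityMeasure P] (h : IsCoupling π P Q) :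
    W2sq P Q ≤ ∫⁻ p, edist p.1 p.2 ^ 2 ∂π :=
  iInf₂_le π ⟨h.isProbabilityMeasure_s11, h⟩

lemma exists_le_map_fst_eq {π : Measure (X × Y)} {μ ν : Measure X} [IsFiniteMeasure μ]
    (hπ : π.map Prod.fst = μ) (hν : ν ≤ μ) : ∃ π' ≤ π, π'.map Prod.fst = ν := by
  have : IsFiniteMeasure ν := isFiniteMeasure_of_le μ hν
  set g := ν.rnDeriv μ
  have hg : Measurable g := Measure.measurable_rnDeriv ν μ
  refine ⟨π.withDensity (g ·.1), ?_, ?_⟩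
  · have hg1 : ∀ᵐ x ∂π.map Prod.fst, g x ≤ 1 := hπ ▸ Measure.rnDeriv_le_one_of_le hν
    have : (g ·.1) ≤ᵐ[π] 1 := ae_of_ae_map measurable_fst.aemeasurable hg1
    simpa using withDensity_mono this
  · ext B hB
    rw [Measure.map_apply measurable_fst hB, withDensity_apply _ (measurable_fst hB),
      ← setLIntegral_map hB hg measurable_fst, hπ, ← withDensity_apply _ hB,
      Measure.withDensity_rnDeriv_eq _ _ (Measure.absolutelyContinuous_of_le hν)]

end Coupling

section Transport

variable {X : Type*} [MeasurableSpace X]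

lemma exists_isCoupling_lintegral_le {P₀ Q₀ P ν : Measure X} [IsFiniteMeasure P₀]
    (hνP : ν ≤ P₀) (hνQ : ν ≤ Q₀) {π : Measure (X × X)} (hπ : IsCoupling π P₀ P)
    {c : X × X → ℝ≥0∞} (hc : ∀ x, c (x, x) = 0) :
    ∃ γ μ, IsCoupling γ Q₀ (μ + (Q₀ - ν)) ∧ ∫⁻ p, c p ∂γ ≤ ∫⁻ p, c p ∂π ∧
      μ ≤ P ∧ μ Set.univ = ν Set.univ := by
  have : IsFiniteMeasure ν := isFiniteMeasure_of_le P₀ hνP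
  obtain ⟨π', hπ'π, hπ'⟩ := exists_le_map_fst_eq hπ.1 hνP
  have hγ : IsCoupling (π' + (Q₀ - ν).map fun x ↦ (x, x)) Q₀ (π'.map Prod.snd + (Q₀ - ν)) := by
    have h := IsCoupling.add_s11 (P₂ := Q₀ - ν) ⟨hπ', rfl⟩ (isCoupling_map_diag _)
    rwa [add_comm ν, Measure.sub_add_cancel_of_le hνQ] at h
  refine ⟨_, _, hγ, ?_, hπ.2 ▸ Measure.map_mono hπ'π measurable_snd, ?_⟩
  · rw [lintegral_add_measure, lintegral_map_diag_eq_zero _ hc, add_zero]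
    exact lintegral_mono' hπ'π le_rfl
  · rw [← hπ', Measure.map_apply measurable_snd .univ, Measure.map_apply measurable_fst .univ,
      Set.preimage_univ, Set.preimage_univ]

lemma exists_W2sq_lt_of_W2sq_lt [PseudoEMetricSpace X] {P₀ Q₀ P ν : Measure X}
    [IsProbabilityMeasure P₀] [IsProbabilityMeasure Q₀] (hνP : ν ≤ P₀) (hνQ : ν ≤ Q₀)
    {c : ℝ≥0∞} (hP : W2sq P₀ P < c) :
    ∃ Q μ : Measure X, IsProbabilityMeasure Q ∧ W2sq Q₀ Q < c ∧
      μ ≤ P ∧ μ ≤ Q ∧ μ Set.univ = ν Set.univ := by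
  obtain ⟨π, ⟨-, hπ⟩, hπc⟩ : ∃ π, (IsProbabilityMeasure π ∧ IsCoupling π P₀ P) ∧
      ∫⁻ p, edist p.1 p.2 ^ 2 ∂π < c := by
    simpa only [W2sq, iInf_lt_iff, exists_prop, Set.mem_ofPred_eq] using hP
  obtain ⟨γ, μ, hγ, hγπ, hμP, hμ⟩ :=
    exists_isCoupling_lintegral_le hνP hνQ hπ (c := fun p ↦ edist p.1 p.2 ^ 2) (by simp)
  have := hγ.isProbabilityMeasure_s11
  have : IsProbabilityMeasure (μ + (Q₀ - ν)) :=
    hγ.2 ▸ Measure.isProbabilityMeasure_map (by fun_prop)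
  exact ⟨_, μ, this, ((W2sq_le_lintegral hγ).trans hγπ).trans_lt hπc, hμP,
    Measure.le_add_right le_rfl, hμ⟩

end Transport

lemma integral_le_integral_add_of_le {X : Type*} [MeasurableSpace X] {μ P Q : Measure X}
    [IsFiniteMeasure P] [IsFiniteMeasure Q] (hμP : μ ≤ P) (hμQ : μ ≤ Q) {f : X → ℝ} {M : ℝ}
    (hf : Measurable f) (hfM : ∀ x, 0 ≤ f x ∧ f x ≤ M) :
    ∫ x, f x ∂P ≤ ∫ x, f x ∂Q + M * (P.real Set.univ - μ.real Set.univ) := by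
  have : IsFiniteMeasure μ := isFiniteMeasure_of_le P hμP
  have hint (ρ : Measure X) [IsFiniteMeasure ρ] : Integrable f ρ :=
    .of_bound hf.aestronglyMeasurable M <| .of_forall fun x ↦ by
      rw [Real.norm_of_nonneg (hfM x).1]; exact (hfM x).2
  have hrest : ∫ x, f x ∂(P - μ) ≤ M * (P - μ).real Set.univ := by
    simpa [mul_comm] using integral_mono (hint _) (integrable_const M) fun x ↦ (hfM x).2
  have hμ : ∫ x, f x ∂μ ≤ ∫ x, f x ∂Q :=
    integral_mono_measure hμQ (.of_forall fun x ↦ (hfM x).1) (hint Q)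
  calc ∫ x, f x ∂P = ∫ x, f x ∂μ + ∫ x, f x ∂(P - μ) := by
        rw [← integral_add_measure (hint _) (hint _), add_comm, Measure.sub_add_cancel_of_le hμP]
    _ ≤ ∫ x, f x ∂Q + M * (P.real Set.univ - μ.real Set.univ) := by
        have hmass : (P - μ).real Set.univ + μ.real Set.univ = P.real Set.univ := by
          rw [← measureReal_add_apply, Measure.sub_add_cancel_of_le hμP]
        rw [← hmass, add_sub_cancel_right]
        linarith

lemma eq_of_isProbabilityMeasure_of_subsingleton {X : Type*} [MeasurableSpace X] [Subsingleton X]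
    (P Q : Measure X) [IsProbabilityMeasure P] [IsProbabilityMeasure Q] : P = Q := by
  ext B -
  rcases B.eq_empty_or_nonempty with rfl | hB
  · simp
  · simp [hB.eq_univ]

lemma two_mul_sq_mul_tvDist_pos {X : Type*} [MetricSpace X] [MeasurableSpace X] {D : ℝ}
    (hD : ∀ u v : X, dist u v ≤ D) {P₀ Q₀ : Measure X} [IsProbabilityMeasure P₀]
    [IsProbabilityMeasure Q₀] (h : P₀ ≠ Q₀) : 0 < 2 * D ^ 2 * tvDist P₀ Q₀ := by
  have htv : 0 < tvDist P₀ Q₀ := (tvDist_nonneg P₀ Q₀).lt_of_ne' (mt eq_of_tvDist_eq_zero h)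
  have hD0 : D ≠ 0 := by
    rintro rfl
    have : Subsingleton X := ⟨fun u v ↦ dist_le_zero.mp (hD u v)⟩
    exact h (eq_of_isProbabilityMeasure_of_subsingleton P₀ Q₀)
  positivity

lemma exists_W2sq_le_integral_le_add {X : Type*} [MetricSpace X] [MeasurableSpace X] {D : ℝ}
    (hD : ∀ u v : X, dist u v ≤ D) {P₀ Q₀ P : Measure X} [IsProbabilityMeasure P₀]
    [IsProbabilityMeasure Q₀] [IsProbabilityMeasure P] {r : ℝ}
    (hW : W2sq P₀ P ≤ ENNReal.ofReal (r ^ 2)) :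
    ∃ Q : Measure X, IsProbabilityMeasure Q ∧
      W2sq Q₀ Q ≤ ENNReal.ofReal (2 * D ^ 2 * tvDist P₀ Q₀ + r ^ 2) ∧
      ∀ (M : ℝ) (f : X → ℝ), Measurable f → (∀ x, 0 ≤ f x ∧ f x ≤ M) →
        ∫ x, f x ∂P ≤ ∫ x, f x ∂Q + M * tvDist P₀ Q₀ := by
  by_cases hPQ : P₀ = Q₀
  · subst hPQ
    refine ⟨P, inferInstance, hW.trans (ENNReal.ofReal_le_ofReal ?_), fun M f _ _ ↦ ?_⟩
    all_goals simp [tvDist_eq_measureReal_sub]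
  obtain ⟨ν, hνP, hνQ, hν⟩ := exists_le_le_measureReal_univ_eq_one_sub_tvDist P₀ Q₀
  have hslack := two_mul_sq_mul_tvDist_pos hD hPQ
  have hlt : W2sq P₀ P < ENNReal.ofReal (2 * D ^ 2 * tvDist P₀ Q₀ + r ^ 2) :=
    hW.trans_lt <| ENNReal.ofReal_lt_ofReal_iff'.mpr ⟨by linarith, by positivity⟩
  obtain ⟨Q, μ, hQ, hQW, hμP, hμQ, hμ⟩ := exists_W2sq_lt_of_W2sq_lt hνP hνQ hlt
  refine ⟨Q, hQ, hQW.le, fun M f hf hfM ↦ ?_⟩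
  have hmass : μ.real Set.univ = 1 - tvDist P₀ Q₀ := by rw [← hν, measureReal_def, hμ]; rfl
  simpa [hmass] using integral_le_integral_add_of_le hμP hμQ hf hfM

theorem stmt11_general {X : Type*} [MetricSpace X] [MeasurableSpace X]
    (D : ℝ) (hD : ∀ u v : X, dist u v ≤ D)
    (P₀ Q₀ : Measure X) [IsProbabilityMeasure P₀] [IsProbabilityMeasure Q₀]
    (r : ℝ) :
    (∀ P : Measure X, IsProbabilityMeasure P →
      W2sq P₀ P ≤ ENNReal.ofReal (r ^ 2) →
      ∃ Q : Measure X, IsProbabilityMeasure Q ∧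
        W2sq Q₀ Q ≤ ENNReal.ofReal (2 * D ^ 2 * tvDist P₀ Q₀ + r ^ 2) ∧
        ∀ (M : ℝ) (f : X → ℝ), 0 ≤ M → Measurable f → (∀ x, 0 ≤ f x ∧ f x ≤ M) →
          ∫ x, f x ∂P ≤ ∫ x, f x ∂Q + 2 * M * tvDist P₀ Q₀) ∧
    (∀ (M : ℝ) (f : X → ℝ) (ε : ℝ), 0 ≤ M → Measurable f → (∀ x, 0 ≤ f x ∧ f x ≤ M) →
      (∀ Q : Measure X, IsProbabilityMeasure Q →
        W2sq Q₀ Q ≤ ENNReal.ofReal (2 * D ^ 2 * tvDist P₀ Q₀ + r ^ 2) →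
        ∫ x, f x ∂Q ≤ ε) →
      ∀ P : Measure X, IsProbabilityMeasure P →
        W2sq P₀ P ≤ ENNReal.ofReal (r ^ 2) →
        ∫ x, f x ∂P ≤ ε + 2 * M * tvDist P₀ Q₀) := by
  refine ⟨fun P hP hW ↦ ?_, fun M f ε hM hf hfM hball P hP hW ↦ ?_⟩
  all_goals obtain ⟨Q, hQ, hQW, hPQ⟩ := exists_W2sq_le_integral_le_add hD (Q₀ := Q₀) hW
  · refine ⟨Q, hQ, hQW, fun M f hM hf hfM ↦ ?_⟩
    linarith [hPQ M f hf hfM, mul_nonneg hM (tvDist_nonneg P₀ Q₀)]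
  · linarith [hPQ M f hf hfM, hball Q hQ hQW, mul_nonneg hM (tvDist_nonneg P₀ Q₀)]

/-- On a space of diameter at most `D`: (i) for any `P` with `W₂(P₀,P) ≤ r` there is a `Q`
with `W₂(Q₀,Q)² ≤ 2D²·TV(P₀,Q₀) + r²` such that `E_P f ≤ E_Q f + 2M·TV(P₀,Q₀)` for
every measurable `f` with `0 ≤ f ≤ M`; (ii) consequently, a uniform bound on the
`W₂`-ball around `Q₀` transfers to the `W₂`-ball around `P₀`. -/
theorem stmt11 {X : Type*} [MetricSpace X] [MeasurableSpace X] [BorelSpace X]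
    (D : ℝ) (hD : ∀ u v : X, dist u v ≤ D)
    (P₀ Q₀ : Measure X) [IsProbabilityMeasure P₀] [IsProbabilityMeasure Q₀]
    (r : ℝ) (hr : 0 ≤ r) :
    (∀ P : Measure X, IsProbabilityMeasure P →
      W2sq P₀ P ≤ ENNReal.ofReal (r ^ 2) →
      ∃ Q : Measure X, IsProbabilityMeasure Q ∧
        W2sq Q₀ Q ≤ ENNReal.ofReal (2 * D ^ 2 * tvDist P₀ Q₀ + r ^ 2) ∧
        ∀ (M : ℝ) (f : X → ℝ), 0 ≤ M → Measurable f → (∀ x, 0 ≤ f x ∧ f x ≤ M) →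
          ∫ x, f x ∂P ≤ ∫ x, f x ∂Q + 2 * M * tvDist P₀ Q₀) ∧
    (∀ (M : ℝ) (f : X → ℝ) (ε : ℝ), 0 ≤ M → Measurable f → (∀ x, 0 ≤ f x ∧ f x ≤ M) →
      (∀ Q : Measure X, IsProbabilityMeasure Q →
        W2sq Q₀ Q ≤ ENNReal.ofReal (2 * D ^ 2 * tvDist P₀ Q₀ + r ^ 2) →
        ∫ x, f x ∂Q ≤ ε) →
      ∀ P : Measure X, IsProbabilityMeasure P →
        W2sq P₀ P ≤ ENNReal.ofReal (r ^ 2) →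
        ∫ x, f x ∂P ≤ ε + 2 * M * tvDist P₀ Q₀) :=
  stmt11_general D hD P₀ Q₀ r
end
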